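/- Let G be a finite multigraph and let v ≠ w be vertices forming a 3-connection in G, i.e., λ(v, w) ≥ 3. If π is a partition of the vertex set of G such that the quotient G^π is a cactus, then v and w belong to the same block of π. -/

import Mathlib

set_option autoImplicit false

/-! ## Multigraphs -/

/-- A multigraph: a vertex type `V`, an edge type `E`, and an assignment to each edge of
its unordered pair of endpoints.  Loops and parallel edges are allowed. -/
structure Multigraph (V E : Type) where
  ends : E → Sym2 V

namespace Multigraph

variable {V E : Type}

/-- `G.ReachAvoid F u v` : `v` can be reached from `u` by a walk using no edge of `F`. -/
inductive ReachAvoid (G : Multigraph V E) (F : Set E) : V → V → Prop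
  | refl (v : V) : ReachAvoid G F v v
  | tail {u v w : V} (e : E) (he : e ∉ F) (hvw : G.ends e = s(v, w))
      (h : ReachAvoid G F u v) : ReachAvoid G F u w

/-- A multigraph is connected if any two vertices are joined by a walk. -/
def Connected (G : Multigraph V E) : Prop := ∀ u v : V, G.ReachAvoid ∅ u v

/-- `F` is a set of edges whose deletion disconnects `v` from `w`. -/
def IsEdgeCut (G : Multigraph V E) (v w : V) (F : Set E) : Prop := ¬ G.ReachAvoid F v w

/-- Edge connectivity `λ(v, w)`: the minimum number of edges whose deletion
disconnects `v` from `w`. -/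
noncomputable def edgeConn (G : Multigraph V E) (v w : V) : ℕ :=
  sInf {k : ℕ | ∃ F : Finset E, F.card = k ∧ G.IsEdgeCut v w ↑F}

/-- Walks in a multigraph, recorded together with the edges they traverse. -/
inductive Walk (G : Multigraph V E) : V → V → Type
  | nil (v : V) : Walk G v v
  | cons {u v w : V} (e : E) (huv : G.ends e = s(u, v)) (p : Walk G v w) : Walk G u w

namespace Walk

variable {G : Multigraph V E}

/-- The list of edges traversed by a walk. -/
def edges : ∀ {u v : V}, G.Walk u v → List E
  | _, _, .nil _ => []
  | _, _, .cons e _ p => e :: edges p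

/-- The list of vertices visited by a walk (including both endpoints). -/
def verts : ∀ {u v : V}, G.Walk u v → List V
  | _, v, .nil _ => [v]
  | u, _, .cons _ _ p => u :: verts p

/-- A walk is a path if it visits no vertex twice. -/
def IsPath {u v : V} (p : G.Walk u v) : Prop := p.verts.Nodup

end Walk

/-- `S` is the edge set of a simple cycle of `G`: a nonempty closed walk with no repeated
edges and no repeated vertices (other than the final return to the starting point).
A loop is a simple cycle of length one. -/
def IsSimpleCycleOn [DecidableEq E] (G : Multigraph V E) (S : Finset E) : Prop :=
  ∃ (v : V) (p : G.Walk v v),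
    p.edges ≠ [] ∧ p.edges.Nodup ∧ p.verts.dropLast.Nodup ∧ p.edges.toFinset = S

/-- A cactus: a connected multigraph in which every edge lies on exactly one simple cycle
(simple cycles being identified with their edge sets). -/
def IsCactus [DecidableEq E] (G : Multigraph V E) : Prop :=
  G.Connected ∧ ∀ e : E, ∃! S : Finset E, G.IsSimpleCycleOn S ∧ e ∈ S

/-- Two-edge-connected: connected, and still connected after deleting any single edge. -/
def TwoEdgeConnected (G : Multigraph V E) : Prop :=
  G.Connected ∧ ∀ (e : E) (u v : V), G.ReachAvoid {e} u v

/-- The quotient multigraph by a partition (setoid) of the vertices: the vertices are the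
blocks, and each edge joins the blocks of its original endpoints. -/
def quot (G : Multigraph V E) (σ : Setoid V) : Multigraph (Quotient σ) E :=
  ⟨fun e => (G.ends e).map (Quotient.mk σ)⟩

/-- Degree of a vertex: the number of edge-incidences at it (loops count twice). -/
def degree [DecidableEq V] [Fintype E] (G : Multigraph V E) (v : V) : ℕ :=
  ∑ e : E,
    Sym2.lift
      ⟨fun a b => (if a = v then 1 else 0) + (if b = v then 1 else 0),
        fun _ _ => add_comm _ _⟩ (G.ends e)

/-- A leaf is a vertex of degree one. -/
def IsLeaf [DecidableEq V] [Fintype E] (G : Multigraph V E) (v : V) : Prop :=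
  G.degree v = 1

/-- A tree: a connected multigraph with no simple cycles. -/
def IsTree [DecidableEq E] (G : Multigraph V E) : Prop :=
  G.Connected ∧ ∀ S : Finset E, ¬ G.IsSimpleCycleOn S

end Multigraph

/-- An embedding of the multigraph `H` into `G`, realizing `H` as a subgraph of `G`. -/
structure Multigraph.Embedding {W F V E : Type} (H : Multigraph W F) (G : Multigraph V E) where
  vmap : W → V
  emap : F → E
  vmap_inj : Function.Injective vmap
  emap_inj : Function.Injective emap
  ends_map : ∀ f : F, G.ends (emap f) = (H.ends f).map vmap

/-! ## Multidigraphs -/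

/-- A multidigraph: vertex type `V`, edge type `E`, and source and target maps. -/
structure Multidigraph (V E : Type) where
  src : E → V
  tgt : E → V

namespace Multidigraph

variable {V E : Type}

/-- The underlying multigraph of a multidigraph. -/
def toMultigraph (D : Multidigraph V E) : Multigraph V E :=
  ⟨fun e => s(D.src e, D.tgt e)⟩

/-- Directed walks in a multidigraph. -/
inductive DiWalk (D : Multidigraph V E) : V → V → Type
  | nil (v : V) : DiWalk D v v
  | cons {u v w : V} (e : E) (hs : D.src e = u) (ht : D.tgt e = v)
      (p : DiWalk D v w) : DiWalk D u w

namespace DiWalk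

variable {D : Multidigraph V E}

/-- The list of edges traversed by a directed walk. -/
def edges : ∀ {u v : V}, D.DiWalk u v → List E
  | _, _, .nil _ => []
  | _, _, .cons e _ _ p => e :: edges p

/-- The list of vertices visited by a directed walk. -/
def verts : ∀ {u v : V}, D.DiWalk u v → List V
  | _, v, .nil _ => [v]
  | u, _, .cons _ _ _ p => u :: verts p

end DiWalk

/-- `S` is the edge set of a simple directed cycle of `D`. -/
def IsDiCycleOn [DecidableEq E] (D : Multidigraph V E) (S : Finset E) : Prop :=
  ∃ (v : V) (p : D.DiWalk v v),
    p.edges ≠ [] ∧ p.edges.Nodup ∧ p.verts.dropLast.Nodup ∧ p.edges.toFinset = S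

/-- An oriented cactus: the underlying multigraph is a cactus and each of its simple
cycles (pads) is a directed cycle. -/
def IsOrientedCactus [DecidableEq E] (D : Multidigraph V E) : Prop :=
  D.toMultigraph.IsCactus ∧
    ∀ S : Finset E, D.toMultigraph.IsSimpleCycleOn S → D.IsDiCycleOn S

/-- The quotient multidigraph by a partition (setoid) of the vertices. -/
def quot (D : Multidigraph V E) (σ : Setoid V) : Multidigraph (Quotient σ) E where
  src := fun e => Quotient.mk σ (D.src e)
  tgt := fun e => Quotient.mk σ (D.tgt e)

/-- Indegree of a vertex: the number of edges with target `v`. -/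
def indeg [DecidableEq V] [Fintype E] (D : Multidigraph V E) (v : V) : ℕ :=
  (Finset.univ.filter fun e => D.tgt e = v).card

/-- Outdegree of a vertex: the number of edges with source `v`. -/
def outdeg [DecidableEq V] [Fintype E] (D : Multidigraph V E) (v : V) : ℕ :=
  (Finset.univ.filter fun e => D.src e = v).card

end Multidigraph

/-- An embedding of the multidigraph `H` into `G`, realizing `H` as a subgraph of `G`. -/
structure Multidigraph.Embedding {W F V E : Type}
    (H : Multidigraph W F) (G : Multidigraph V E) where
  vmap : W → V
  emap : F → E
  vmap_inj : Function.Injective vmap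
  emap_inj : Function.Injective emap
  src_map : ∀ f : F, G.src (emap f) = vmap (H.src f)
  tgt_map : ∀ f : F, G.tgt (emap f) = vmap (H.tgt f)

/-! ## Cycle graphs and non-crossing partitions -/

/-- The cycle graph of length `n`: vertices `Fin n`, edges `Fin n`, edge `i` joining
`v i` and `v (i+1)` (indices mod `n`). -/
def cycleGraph (n : ℕ) [NeZero n] : Multigraph (Fin n) (Fin n) :=
  ⟨fun i => s(i, i + 1)⟩

/-- The cycle graph of length `n` in which each edge carries an orientation:
edge `i` is oriented counterclockwise (from `v i` to `v (i+1)`) if `orient i = true`,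
and clockwise otherwise. -/
def cycleDigraph (n : ℕ) [NeZero n] (orient : Fin n → Bool) : Multidigraph (Fin n) (Fin n) where
  src := fun i => if orient i then i else i + 1
  tgt := fun i => if orient i then i + 1 else i

/-- A relation (e.g. a partition) on `Fin m` is non-crossing if there are no indices
`i₁ < i₂ < i₃ < i₄` with `i₁, i₃` in one block and `i₂, i₄` in a different block. -/
def NonCrossingRel {m : ℕ} (r : Fin m → Fin m → Prop) : Prop :=
  ¬ ∃ i₁ i₂ i₃ i₄ : Fin m, i₁ < i₂ ∧ i₂ < i₃ ∧ i₃ < i₄ ∧ r i₁ i₃ ∧ r i₂ i₄ ∧ ¬ r i₁ i₂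

/-- The union of a partition `σ` of the vertices `v₁, …, vₙ` (at the even positions) and
a partition `κ` of the edges `e₁, …, eₙ` (at the odd positions) of a cycle, as a relation
on the `2n` interlaced points `v₁, e₁, v₂, e₂, …, vₙ, eₙ`. -/
def interRel {n : ℕ} (σ κ : Setoid (Fin n)) (x y : Fin (2 * n)) : Prop :=
  (x.val % 2 = 0 ∧ y.val % 2 = 0 ∧
    σ.r ⟨x.val / 2, by have := x.isLt; omega⟩ ⟨y.val / 2, by have := y.isLt; omega⟩) ∨
  (x.val % 2 = 1 ∧ y.val % 2 = 1 ∧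
    κ.r ⟨x.val / 2, by have := x.isLt; omega⟩ ⟨y.val / 2, by have := y.isLt; omega⟩)

/-- `κ` is the Kreweras complement of `σ`: the largest partition of the edges such that
the union `σ ∪ κ` is non-crossing with respect to the interlaced (cyclic) order. -/
def IsKrewerasComplement {n : ℕ} (σ κ : Setoid (Fin n)) : Prop :=
  NonCrossingRel (interRel σ κ) ∧
    ∀ κ' : Setoid (Fin n), NonCrossingRel (interRel σ κ') → κ' ≤ κ

open Classical in
/-- The block of the partition `κ` containing `i`, as a finite set. -/
noncomputable def setoidClass {n : ℕ} (κ : Setoid (Fin n)) (i : Fin n) : Finset (Fin n) :=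
  Finset.univ.filter fun j => κ.r i j

open Fin.NatCast in
/-- `j` is the next element of `B` encountered strictly after `i` in the cyclic order of
`Fin n` (if `B = {i}` then `j = i` itself, one full turn later). -/
def CyclicNextIn {n : ℕ} [NeZero n] (B : Finset (Fin n)) (i j : Fin n) : Prop :=
  i ∈ B ∧ j ∈ B ∧ ∃ d : ℕ, 0 < d ∧ d ≤ n ∧ j = i + (d : Fin n) ∧
    ∀ d' : ℕ, 0 < d' → d' < d → i + (d' : Fin n) ∉ B

/-! ## Wedges of two (di)graphs at their roots -/

/-- The canonical map from the vertices of `t'` into the wedge vertex type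
`V ⊕ {x : V' // x ≠ ρ'}`, sending the root `ρ'` to (the image of) `ρ`. -/
def wedgeJ {V V' : Type} [DecidableEq V'] (ρ : V) (ρ' : V') :
    V' → V ⊕ {x : V' // x ≠ ρ'} :=
  fun x => if h : x = ρ' then Sum.inl ρ else Sum.inr ⟨x, h⟩

/-- The wedge of two multigraphs `t`, `t'` obtained by identifying `ρ ∈ t` with `ρ' ∈ t'`. -/
def Multigraph.wedge {V E V' E' : Type} [DecidableEq V']
    (t : Multigraph V E) (t' : Multigraph V' E') (ρ : V) (ρ' : V') :
    Multigraph (V ⊕ {x : V' // x ≠ ρ'}) (E ⊕ E') :=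
  ⟨fun e =>
    match e with
    | Sum.inl e => (t.ends e).map Sum.inl
    | Sum.inr e => (t'.ends e).map (wedgeJ ρ ρ')⟩

/-- The wedge of two multidigraphs `t`, `t'` obtained by identifying `ρ ∈ t` with `ρ' ∈ t'`. -/
def Multidigraph.wedge {V E V' E' : Type} [DecidableEq V']
    (t : Multidigraph V E) (t' : Multidigraph V' E') (ρ : V) (ρ' : V') :
    Multidigraph (V ⊕ {x : V' // x ≠ ρ'}) (E ⊕ E') where
  src := fun e =>
    match e with
    | Sum.inl e => Sum.inl (t.src e)
    | Sum.inr e => wedgeJ ρ ρ' (t'.src e)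
  tgt := fun e =>
    match e with
    | Sum.inl e => Sum.inl (t.tgt e)
    | Sum.inr e => wedgeJ ρ ρ' (t'.tgt e)

/-! ## Flowers (a cycle with graphs attached) and stars (trees wedged at a common root) -/

/-- The canonical map from the vertices of the `i`-th attached graph into the flower,
sending the basepoint `b i` to the cycle vertex `i`. -/
def flowerJ {n : ℕ} {W : Fin n → Type} [∀ i, DecidableEq (W i)]
    (b : ∀ i, W i) (i : Fin n) :
    W i → Fin n ⊕ (Σ i, {x : W i // x ≠ b i}) :=
  fun x => if h : x = b i then Sum.inl i else Sum.inr ⟨i, x, h⟩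

/-- The flower: a cycle of length `n` with the multigraph `d i` attached at the cycle
vertex `i` via its basepoint `b i`; the attached graphs are disjoint except through the
cycle, and `d i` meets the cycle exactly in the vertex `i`. -/
def flowerGraph {n : ℕ} [NeZero n] {W F : Fin n → Type} [∀ i, DecidableEq (W i)]
    (d : ∀ i, Multigraph (W i) (F i)) (b : ∀ i, W i) :
    Multigraph (Fin n ⊕ (Σ i, {x : W i // x ≠ b i})) (Fin n ⊕ (Σ i, F i)) :=
  ⟨fun e =>
    match e with
    | Sum.inl k => s(Sum.inl k, Sum.inl (k + 1))
    | Sum.inr ⟨i, f⟩ => ((d i).ends f).map (flowerJ b i)⟩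

/-- The canonical map from the vertices of the `i`-th tree into the star, sending the
root `r i` to the common amalgamated root. -/
def starJ {n : ℕ} {W : Fin n → Type} [∀ i, DecidableEq (W i)]
    (r : ∀ i, W i) (i : Fin n) :
    W i → Unit ⊕ (Σ i, {x : W i // x ≠ r i}) :=
  fun x => if h : x = r i then Sum.inl () else Sum.inr ⟨i, x, h⟩

/-- The star: the disjoint union of the multigraphs `t i` with all the roots `r i`
identified to a single vertex. -/
def starGraph {n : ℕ} {W F : Fin n → Type} [∀ i, DecidableEq (W i)]
    (t : ∀ i, Multigraph (W i) (F i)) (r : ∀ i, W i) :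
    Multigraph (Unit ⊕ (Σ i, {x : W i // x ≠ r i})) (Σ i, F i) :=
  ⟨fun e => ((t e.1).ends e.2).map (starJ r e.1)⟩

/-! ## Graphs of matrices -/

/-- The partition of `V` identifying the input `vin` with the output `vout` (and nothing
else). -/
def rootSetoid {V : Type} (vin vout : V) : Setoid V where
  r a b := a = b ∨ ((a = vin ∨ a = vout) ∧ (b = vin ∨ b = vout))
  iseqv := by
    constructor
    · intro x; exact Or.inl rfl
    · rintro x y (rfl | ⟨hx, hy⟩)
      · exact Or.inl rfl
      · exact Or.inr ⟨hy, hx⟩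
    · rintro x y z (rfl | ⟨hx, hy⟩) (rfl | ⟨hy', hz⟩)
      · exact Or.inl rfl
      · exact Or.inr ⟨hy', hz⟩
      · exact Or.inr ⟨hx, hy⟩
      · exact Or.inr ⟨hx, hz⟩

/-- The graph of matrices `Z_g(A₁, …, A_K)` associated to a bi-rooted multidigraph `g`
with input `vin`, output `vout` and edge ordering `o`. -/
noncomputable def graphOfMatrices {V E : Type} [Fintype V] [Fintype E] [DecidableEq V] {K N : ℕ}
    (g : Multidigraph V E) (vin vout : V) (o : E ≃ Fin K)
    (A : Fin K → Matrix (Fin N) (Fin N) ℂ) : Matrix (Fin N) (Fin N) ℂ :=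
  Matrix.of fun i j =>
    ∑ φ : V → Fin N,
      if φ vout = i ∧ φ vin = j then ∏ e : E, A (o e) (φ (g.tgt e)) (φ (g.src e)) else 0

/-! ## Set partitions as finite set systems -/

/-- `P` is a partition of the (finite) type `V`: its blocks are nonempty and every
element of `V` lies in exactly one block. -/
def IsPartitionOf (V : Type) [DecidableEq V] (P : Finset (Finset V)) : Prop :=
  (∀ B ∈ P, B.Nonempty) ∧ ∀ v : V, ∃! B, B ∈ P ∧ v ∈ B

/-- The block of the partition `P` containing `v`. -/
def blockOf {V : Type} [DecidableEq V] (P : Finset (Finset V)) (hP : IsPartitionOf V P)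
    (v : V) : {B : Finset V // B ∈ P} :=
  ⟨Finset.choose (fun B => v ∈ B) P (hP.2 v),
    Finset.choose_mem (fun B => v ∈ B) P (hP.2 v)⟩

/-!
A cut of at most two edges in the cactus `G^π` separating the blocks of `v` and `w` lifts to a
cut in `G`, so `λ(v, w) ≥ 3` forces the two blocks to coincide. In a cactus, distinct vertices
of a cycle are never joined by a walk avoiding that cycle, so two edges of a cycle cut it into
arcs that cannot be rejoined elsewhere. To separate `x` from `y`, take a shortest walk from `x`
to `y` and the cycle through its last edge: the walk first meets that cycle at a vertex `c ≠ y`,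
and removing one edge of the cycle at `c` and one at `y`, on different arcs between them, does it.
-/

namespace Multigraph

variable {V E : Type} {G : Multigraph V E}

namespace Walk

@[simp] lemma edges_nil (v : V) : (nil v : G.Walk v v).edges = [] := rfl

@[simp] lemma edges_cons {u v w : V} (e : E) (h : G.ends e = s(u, v)) (p : G.Walk v w) :
    (cons e h p).edges = e :: p.edges := rfl

@[simp] lemma verts_nil (v : V) : (nil v : G.Walk v v).verts = [v] := rfl

@[simp] lemma verts_cons {u v w : V} (e : E) (h : G.ends e = s(u, v)) (p : G.Walk v w) :
    (cons e h p).verts = u :: p.verts := rfl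

lemma verts_ne_nil : ∀ {u v : V} (p : G.Walk u v), p.verts ≠ []
  | _, _, .nil _ => by simp
  | _, _, .cons _ _ _ => by simp

lemma start_mem_verts : ∀ {u v : V} (p : G.Walk u v), u ∈ p.verts
  | _, _, .nil _ => by simp
  | _, _, .cons _ _ _ => by simp

lemma end_mem_verts : ∀ {u v : V} (p : G.Walk u v), v ∈ p.verts
  | _, _, .nil _ => by simp
  | _, _, .cons _ _ p => List.mem_cons_of_mem _ (end_mem_verts p)

lemma verts_dropLast_cons {u v w : V} (e : E) (h : G.ends e = s(u, v)) (p : G.Walk v w) :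
    (cons e h p).verts.dropLast = u :: p.verts.dropLast := by
  rw [verts_cons, List.dropLast_cons_of_ne_nil (verts_ne_nil p)]

lemma verts_eq_dropLast_append : ∀ {u v : V} (p : G.Walk u v),
    p.verts = p.verts.dropLast ++ [v]
  | _, _, .nil _ => rfl
  | _, _, .cons e h p => by
      rw [verts_dropLast_cons, verts_cons, List.cons_append, ← verts_eq_dropLast_append p]

lemma start_mem_verts_dropLast {u v : V} (p : G.Walk u v) (hp : p.edges ≠ []) :
    u ∈ p.verts.dropLast := by
  cases p with
  | nil => exact absurd rfl hp
  | cons e h p => rw [verts_dropLast_cons]; exact List.mem_cons_self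

lemma eq_of_edges_eq_nil : ∀ {u v : V} (p : G.Walk u v), p.edges = [] → u = v
  | _, _, .nil _, _ => rfl
  | _, _, .cons _ _ _, h => by simp at h

lemma edges_ne_nil_of_ne {u v : V} (p : G.Walk u v) (h : u ≠ v) : p.edges ≠ [] :=
  fun he => h (eq_of_edges_eq_nil p he)

lemma exists_eq_cons_of_ne {u v : V} (p : G.Walk u v) (h : u ≠ v) :
    ∃ (a : V) (e : E) (he : G.ends e = s(u, a)) (r : G.Walk a v), p = cons e he r := by
  cases p with
  | nil => exact absurd rfl h
  | cons e he r => exact ⟨_, e, he, r, rfl⟩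

lemma ends_mem_verts : ∀ {u v : V} (p : G.Walk u v) {e : E} {a b : V},
    e ∈ p.edges → G.ends e = s(a, b) → a ∈ p.verts ∧ b ∈ p.verts
  | _, _, .nil _, _, _, _, he, _ => by simp at he
  | _, _, .cons e' he' p, e, a, b, he, hab => by
      rw [edges_cons, List.mem_cons] at he
      rcases he with rfl | he
      · rw [he', Sym2.eq_iff] at hab
        rcases hab with ⟨rfl, rfl⟩ | ⟨rfl, rfl⟩ <;> simp [start_mem_verts]
      · obtain ⟨ha, hb⟩ := ends_mem_verts p he hab
        exact ⟨List.mem_cons_of_mem _ ha, List.mem_cons_of_mem _ hb⟩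

lemma exists_last_edge : ∀ {u v : V} (p : G.Walk u v), p.edges ≠ [] →
    ∃ e ∈ p.edges, ∃ a, G.ends e = s(a, v)
  | _, _, .nil _, h => absurd rfl h
  | _, _, .cons e he p, _ => by
      by_cases hp : p.edges = []
      · obtain rfl := eq_of_edges_eq_nil p hp
        exact ⟨e, by simp, _, he⟩
      · obtain ⟨e', he', a, ha⟩ := exists_last_edge p hp
        exact ⟨e', List.mem_cons_of_mem _ he', a, ha⟩

def append : ∀ {u v w : V}, G.Walk u v → G.Walk v w → G.Walk u w
  | _, _, _, .nil _, q => q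
  | _, _, _, .cons e h p, q => .cons e h (p.append q)

@[simp] lemma edges_append : ∀ {u v w : V} (p : G.Walk u v) (q : G.Walk v w),
    (p.append q).edges = p.edges ++ q.edges
  | _, _, _, .nil _, _ => rfl
  | _, _, _, .cons e _ p, q => congrArg (e :: ·) (edges_append p q)

lemma verts_append : ∀ {u v w : V} (p : G.Walk u v) (q : G.Walk v w),
    (p.append q).verts = p.verts.dropLast ++ q.verts
  | _, _, _, .nil _, _ => rfl
  | _, _, _, .cons e h p, q => by
      show _ :: (p.append q).verts = _
      rw [verts_append p q, verts_dropLast_cons, List.cons_append]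

lemma verts_dropLast_append {u v w : V} (p : G.Walk u v) (q : G.Walk v w) :
    (p.append q).verts.dropLast = p.verts.dropLast ++ q.verts.dropLast := by
  rw [verts_append, List.dropLast_append_of_ne_nil (verts_ne_nil q)]

lemma mem_verts_append_left {u v w x : V} (p : G.Walk u v) (q : G.Walk v w)
    (hx : x ∈ p.verts) : x ∈ (p.append q).verts := by
  rw [verts_eq_dropLast_append, List.mem_append, List.mem_singleton] at hx
  rw [verts_append]
  rcases hx with hx | rfl
  · exact List.mem_append_left _ hx
  · exact List.mem_append_right _ (start_mem_verts q)

lemma mem_verts_append_right {u v w x : V} (p : G.Walk u v) (q : G.Walk v w)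
    (hx : x ∈ q.verts) : x ∈ (p.append q).verts := by
  rw [verts_append]
  exact List.mem_append_right _ hx

lemma exists_eq_append_of_mem_verts {u v x : V} (p : G.Walk u v) (hx : x ∈ p.verts) :
    ∃ (p₁ : G.Walk u x) (p₂ : G.Walk x v), p = p₁.append p₂ := by
  induction p with
  | nil v =>
      obtain rfl : x = v := by simpa using hx
      exact ⟨nil x, nil x, rfl⟩
  | @cons u v w e he p ih =>
      by_cases hxu : x = u
      · subst hxu
        exact ⟨nil x, cons e he p, rfl⟩
      · obtain ⟨p₁, p₂, rfl⟩ := ih ((List.mem_cons.mp hx).resolve_left hxu)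
        exact ⟨cons e he p₁, p₂, rfl⟩

lemma exists_shorter_of_not_isPath {u v : V} (p : G.Walk u v) (hp : ¬ p.IsPath) :
    ∃ q : G.Walk u v, q.edges.length < p.edges.length ∧ ∀ e ∈ q.edges, e ∈ p.edges := by
  induction p with
  | nil v => simp [IsPath] at hp
  | @cons u v w e he p ih =>
      by_cases hu : u ∈ p.verts
      · obtain ⟨p₁, p₂, rfl⟩ := exists_eq_append_of_mem_verts p hu
        refine ⟨p₂, ?_, fun f hf => by simp [hf]⟩
        simp only [edges_cons, edges_append, List.length_cons, List.length_append]
        omega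
      · have hp' : ¬ p.IsPath := fun h => hp (List.nodup_cons.mpr ⟨hu, h⟩)
        obtain ⟨q, hlt, hsub⟩ := ih hp'
        refine ⟨cons e he q, by simpa using hlt, ?_⟩
        simp only [edges_cons, List.mem_cons]
        exact fun f => Or.imp_right (hsub f)

lemma IsPath.edges_nodup {u v : V} {p : G.Walk u v} (hp : p.IsPath) : p.edges.Nodup := by
  induction p with
  | nil v => simp
  | @cons u v w e he p ih =>
      rw [IsPath, verts_cons, List.nodup_cons] at hp
      exact List.nodup_cons.mpr ⟨fun hmem => hp.1 (ends_mem_verts p hmem he).1, ih hp.2⟩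

lemma IsPath.end_not_mem_verts_dropLast {u v : V} {p : G.Walk u v} (hp : p.IsPath) :
    v ∉ p.verts.dropLast := by
  have := hp
  rw [IsPath, verts_eq_dropLast_append, List.nodup_append] at this
  exact fun h => this.2.2 v h v (List.mem_singleton_self v) rfl

lemma mem_verts_iff_mem_verts_dropLast {u x : V} {p : G.Walk u u} (hp : p.edges ≠ []) :
    x ∈ p.verts ↔ x ∈ p.verts.dropLast := by
  conv_lhs => rw [verts_eq_dropLast_append p, List.mem_append, List.mem_singleton]
  exact ⟨fun h => h.elim id fun h => h ▸ start_mem_verts_dropLast p hp, Or.inl⟩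

def IsCycle {u : V} (p : G.Walk u u) : Prop :=
  p.edges ≠ [] ∧ p.edges.Nodup ∧ p.verts.dropLast.Nodup

lemma IsCycle.rotate {u c : V} {C : G.Walk u u} (hC : C.IsCycle) (hc : c ∈ C.verts) :
    ∃ D : G.Walk c c, D.IsCycle ∧ D.edges.Perm C.edges ∧ ∀ x, x ∈ D.verts ↔ x ∈ C.verts := by
  obtain ⟨p₁, p₂, rfl⟩ := exists_eq_append_of_mem_verts C hc
  have hE : (p₂.append p₁).edges.Perm (p₁.append p₂).edges := by
    simpa using List.perm_append_comm
  have hV : (p₂.append p₁).verts.dropLast.Perm (p₁.append p₂).verts.dropLast := by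
    simpa only [verts_dropLast_append] using List.perm_append_comm
  have hne : (p₂.append p₁).edges ≠ [] := fun h => hC.1 (by rw [h] at hE; exact hE.symm.eq_nil)
  refine ⟨p₂.append p₁, ⟨hne, hE.nodup_iff.mpr hC.2.1, hV.nodup_iff.mpr hC.2.2⟩, hE, fun x => ?_⟩
  rw [mem_verts_iff_mem_verts_dropLast hne, mem_verts_iff_mem_verts_dropLast hC.1]
  exact hV.mem_iff

lemma IsCycle.exists_isPath {u c c' : V} {C : G.Walk u u} (hC : C.IsCycle) (hc : c ∈ C.verts)
    (hc' : c' ∈ C.verts) (hcc' : c ≠ c') :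
    ∃ Q : G.Walk c c', Q.IsPath ∧ (∀ e ∈ Q.edges, e ∈ C.edges) ∧ ∀ x ∈ Q.verts, x ∈ C.verts := by
  obtain ⟨D, hD, hDE, hDV⟩ := hC.rotate hc
  obtain ⟨Q₁, Q₂, rfl⟩ := exists_eq_append_of_mem_verts D ((hDV c').mpr hc')
  have hpath : Q₁.IsPath := by
    have hsub : List.Sublist (Q₁.verts.dropLast ++ [c']) (Q₁.append Q₂).verts.dropLast := by
      rw [verts_dropLast_append]
      exact (List.singleton_sublist.mpr
        (start_mem_verts_dropLast Q₂ (edges_ne_nil_of_ne Q₂ hcc'.symm))).append_left _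
    rw [IsPath, verts_eq_dropLast_append]
    exact hD.2.2.sublist hsub
  exact ⟨Q₁, hpath, fun e he => hDE.subset (by simp [he]),
    fun x hx => (hDV x).mp (mem_verts_append_left Q₁ Q₂ hx)⟩

lemma IsCycle.nodup_verts_append {c a₁ y a₂ : V} {f₁ f₂ : E} {h₁ : G.ends f₁ = s(c, a₁)}
    {h₂ : G.ends f₂ = s(y, a₂)} {r₁ : G.Walk a₁ y} {r₂ : G.Walk a₂ c}
    (hC : ((cons f₁ h₁ r₁).append (cons f₂ h₂ r₂)).IsCycle) : (r₁.verts ++ r₂.verts).Nodup := by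
  have hC := hC.2.2
  rw [verts_dropLast_append, verts_dropLast_cons, verts_dropLast_cons, List.cons_append] at hC
  refine (List.Perm.nodup_iff ?_).mpr hC
  rw [r₁.verts_eq_dropLast_append, r₂.verts_eq_dropLast_append]
  simpa using List.perm_append_singleton c (r₁.verts.dropLast ++ y :: r₂.verts.dropLast)

lemma IsPath.append_isCycle {u v : V} {P : G.Walk u v} {Q : G.Walk v u} (hP : P.IsPath)
    (hQ : Q.IsPath) (huv : u ≠ v) (hE : ∀ e ∈ P.edges, e ∉ Q.edges)
    (hV : ∀ x ∈ P.verts, x ∈ Q.verts → x = u ∨ x = v) : (P.append Q).IsCycle := by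
  refine ⟨by simp [edges_ne_nil_of_ne P huv], ?_, ?_⟩
  · rw [edges_append, List.nodup_append]
    exact ⟨hP.edges_nodup, hQ.edges_nodup, fun e he e' he' h => hE e he (h ▸ he')⟩
  · rw [verts_dropLast_append, List.nodup_append]
    refine ⟨hP.sublist (List.dropLast_sublist _), hQ.sublist (List.dropLast_sublist _), ?_⟩
    rintro x hxP _ hxQ rfl
    rcases hV x (List.dropLast_subset _ hxP) (List.dropLast_subset _ hxQ) with rfl | rfl
    · exact hQ.end_not_mem_verts_dropLast hxQ
    · exact hP.end_not_mem_verts_dropLast hxP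

lemma exists_prefix_avoiding {S : Set E} : ∀ {u v : V} (p : G.Walk u v),
    (∃ e ∈ p.edges, e ∈ S) →
    ∃ (a : V) (p₁ : G.Walk u a), (∀ f ∈ p₁.edges, f ∉ S) ∧
      p₁.edges.length < p.edges.length ∧ ∃ g ∈ S, ∃ b, G.ends g = s(a, b)
  | _, _, .nil _, h => by simp at h
  | _, _, .cons e he p, h => by
      by_cases heS : e ∈ S
      · exact ⟨_, .nil _, by simp, by simp, e, heS, _, he⟩
      · obtain ⟨f, hf, hfS⟩ := h
        have hf' : f ∈ p.edges := (List.mem_cons.mp hf).resolve_left (by rintro rfl; exact heS hfS)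
        obtain ⟨a, p₁, h₁, hlt, hg⟩ := exists_prefix_avoiding p ⟨f, hf', hfS⟩
        refine ⟨a, .cons e he p₁, ?_, by simpa using hlt, hg⟩
        simp only [edges_cons, List.mem_cons, forall_eq_or_imp]
        exact ⟨heS, h₁⟩

end Walk

namespace ReachAvoid

variable {F : Set E}

lemma trans {u v w : V} (h₁ : G.ReachAvoid F u v) (h₂ : G.ReachAvoid F v w) :
    G.ReachAvoid F u w := by
  induction h₂ with
  | refl => exact h₁
  | tail e he hvw _ ih => exact .tail e he hvw ih

lemma single {u v : V} {e : E} (he : e ∉ F) (h : G.ends e = s(u, v)) : G.ReachAvoid F u v :=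
  .tail e he h (.refl u)

lemma invariant {P : V → Prop} (hP : ∀ e ∉ F, ∀ a b, G.ends e = s(a, b) → P a → P b)
    {u v : V} (h : G.ReachAvoid F u v) (hu : P u) : P v := by
  induction h with
  | refl => exact hu
  | tail e he hvw _ ih => exact hP e he _ _ hvw ih

lemma quot (σ : Setoid V) {u v : V} (h : G.ReachAvoid F u v) :
    (G.quot σ).ReachAvoid F (Quotient.mk σ u) (Quotient.mk σ v) :=
  h.invariant (P := fun t => (G.quot σ).ReachAvoid F (Quotient.mk σ u) (Quotient.mk σ t))
    (fun e he a b hab ha => .tail e he (by simp [Multigraph.quot, hab]) ha) (.refl _)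

end ReachAvoid

lemma reachAvoid_iff_exists_walk {F : Set E} {u v : V} :
    G.ReachAvoid F u v ↔ ∃ p : G.Walk u v, ∀ e ∈ p.edges, e ∉ F := by
  constructor
  · intro h
    induction h with
    | refl => exact ⟨.nil _, by simp⟩
    | tail e he hvw _ ih =>
        obtain ⟨p, hp⟩ := ih
        refine ⟨p.append (.cons e hvw (.nil _)), fun f hf => ?_⟩
        rcases List.mem_append.mp (Walk.edges_append _ _ ▸ hf) with hf | hf
        · exact hp f hf
        · obtain rfl : f = e := by simpa using hf
          exact he
  · rintro ⟨p, hp⟩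
    induction p with
    | nil v => exact .refl v
    | cons e he p ih =>
        exact (ReachAvoid.single (hp e (by simp)) he).trans (ih fun f hf => hp f (by simp [hf]))

lemma edgeConn_le_card {v w : V} {F : Finset E} (hF : G.IsEdgeCut v w F) :
    G.edgeConn v w ≤ F.card :=
  Nat.sInf_le ⟨F, rfl, hF⟩

lemma IsEdgeCut.of_quot (σ : Setoid V) {v w : V} {F : Set E}
    (h : (G.quot σ).IsEdgeCut (Quotient.mk σ v) (Quotient.mk σ w) F) : G.IsEdgeCut v w F :=
  fun hvw => h (hvw.quot σ)

variable [DecidableEq E]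

lemma Walk.IsCycle.isSimpleCycleOn {u : V} {C : G.Walk u u} (hC : C.IsCycle) :
    G.IsSimpleCycleOn C.edges.toFinset :=
  ⟨u, C, hC.1, hC.2.1, hC.2.2, rfl⟩

namespace IsCactus

lemma edges_toFinset_eq_of_isCycle (hG : G.IsCactus) {u u' : V} {C : G.Walk u u}
    {D : G.Walk u' u'} (hC : C.IsCycle) (hD : D.IsCycle) {e : E} (heC : e ∈ C.edges)
    (heD : e ∈ D.edges) : C.edges.toFinset = D.edges.toFinset :=
  (hG.2 e).unique ⟨hC.isSimpleCycleOn, List.mem_toFinset.mpr heC⟩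
    ⟨hD.isSimpleCycleOn, List.mem_toFinset.mpr heD⟩

/-- Otherwise the path, closed up by an arc of `C`, would be a second cycle through an edge
of `C`. -/
lemma exists_inner_mem_cycle (hG : G.IsCactus) {u c c' : V} {C : G.Walk u u} (hC : C.IsCycle)
    (hc : c ∈ C.verts) (hc' : c' ∈ C.verts) (hcc' : c ≠ c') {P : G.Walk c c'} (hP : P.IsPath)
    (hPC : ∀ e ∈ P.edges, e ∉ C.edges) : ∃ x ∈ P.verts, x ∈ C.verts ∧ x ≠ c ∧ x ≠ c' := by
  by_contra! hmid
  obtain ⟨Q, hQ, hQE, hQV⟩ := hC.exists_isPath hc' hc hcc'.symm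
  have hD : (P.append Q).IsCycle := hP.append_isCycle hQ hcc'
    (fun e he he' => hPC e he (hQE e he'))
    (fun x hxP hxQ => or_iff_not_imp_left.mpr (hmid x hxP (hQV x hxQ)))
  obtain ⟨f, hf⟩ := List.exists_mem_of_ne_nil _ (Walk.edges_ne_nil_of_ne Q hcc'.symm)
  obtain ⟨g, hg⟩ := List.exists_mem_of_ne_nil _ (Walk.edges_ne_nil_of_ne P hcc')
  have hCD := hG.edges_toFinset_eq_of_isCycle hC hD (hQE f hf) (by simp [hf])
  exact hPC g hg (List.mem_toFinset.mp (hCD ▸ List.mem_toFinset.mpr (by simp [hg])))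

lemma eq_of_walk_avoiding_cycle (hG : G.IsCactus) {u c c' : V} {C : G.Walk u u}
    (hC : C.IsCycle) (hc : c ∈ C.verts) (hc' : c' ∈ C.verts) (P : G.Walk c c')
    (hPC : ∀ e ∈ P.edges, e ∉ C.edges) : c = c' := by
  induction hn : P.edges.length using Nat.strong_induction_on generalizing c c' with
  | _ n ih =>
  subst hn
  by_contra hcc'
  by_cases hP : P.IsPath
  · obtain ⟨x, hxP, hxC, hxc, hxc'⟩ := hG.exists_inner_mem_cycle hC hc hc' hcc' hP hPC
    obtain ⟨P₁, P₂, rfl⟩ := Walk.exists_eq_append_of_mem_verts P hxP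
    have hlt : P₁.edges.length < (P₁.append P₂).edges.length := by
      simpa using List.length_pos_of_ne_nil (Walk.edges_ne_nil_of_ne P₂ hxc')
    exact hxc (ih _ hlt hc hxC P₁ (fun e he => hPC e (by simp [he])) rfl).symm
  · obtain ⟨Q, hlt, hsub⟩ := Walk.exists_shorter_of_not_isPath P hP
    exact hcc' (ih _ hlt hc hc' Q (fun e he => hPC e (hsub e he)) rfl)

lemma eq_of_reachAvoid_cycle (hG : G.IsCactus) {u c c' : V} {C : G.Walk u u} (hC : C.IsCycle)
    (hc : c ∈ C.verts) (hc' : c' ∈ C.verts) (h : G.ReachAvoid {e | e ∈ C.edges} c c') :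
    c = c' :=
  let ⟨P, hP⟩ := reachAvoid_iff_exists_walk.mp h
  hG.eq_of_walk_avoiding_cycle hC hc hc' P hP

/-- Removing `f₁` (at `c`) and `f₂` (at `y`) splits the cycle into the arcs `r₁ ∋ y` and
`r₂ ∋ c`. Being joined to `r₂` off the cycle is preserved along every edge other than `f₁, f₂`,
and fails at `y`, since distinct vertices of a cycle are never joined off the cycle. -/
lemma not_reachAvoid_of_isCycle_cons_append_cons (hG : G.IsCactus) {c a₁ y a₂ : V} {f₁ f₂ : E}
    {h₁ : G.ends f₁ = s(c, a₁)} {h₂ : G.ends f₂ = s(y, a₂)} {r₁ : G.Walk a₁ y}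
    {r₂ : G.Walk a₂ c} (hC : ((Walk.cons f₁ h₁ r₁).append (Walk.cons f₂ h₂ r₂)).IsCycle)
    {x : V}
    (hx : G.ReachAvoid {e | e ∈ ((Walk.cons f₁ h₁ r₁).append (Walk.cons f₂ h₂ r₂)).edges} x c) :
    ¬ G.ReachAvoid {f₁, f₂} x y := by
  set C := (Walk.cons f₁ h₁ r₁).append (Walk.cons f₂ h₂ r₂)
  have hr₁ : ∀ t ∈ r₁.verts, t ∈ C.verts :=
    fun t ht => Walk.mem_verts_append_left _ _ (List.mem_cons_of_mem _ ht)
  have hr₂ : ∀ t ∈ r₂.verts, t ∈ C.verts :=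
    fun t ht => Walk.mem_verts_append_right _ _ (List.mem_cons_of_mem _ ht)
  have hsep : ∀ t ∈ r₁.verts, ∀ s ∈ r₂.verts, ¬ G.ReachAvoid {e | e ∈ C.edges} t s :=
    fun t ht s hs h => List.disjoint_of_nodup_append hC.nodup_verts_append ht
      (hG.eq_of_reachAvoid_cycle hC (hr₁ t ht) (hr₂ s hs) h ▸ hs)
  let near (t : V) : Prop := ∃ s ∈ r₂.verts, G.ReachAvoid {e | e ∈ C.edges} t s
  have hnear : ∀ e ∉ ({f₁, f₂} : Set E), ∀ a b, G.ends e = s(a, b) → near a → near b := by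
    rintro e he a b hab ⟨s, hs, has⟩
    by_cases heC : e ∈ C.edges
    · have hr : e ∈ r₁.edges ∨ e ∈ r₂.edges := by
        simp only [Set.mem_insert_iff, Set.mem_singleton_iff, not_or] at he
        simpa [C, he.1, he.2] using heC
      rcases hr with he₁ | he₂
      · exact absurd has (hsep a (r₁.ends_mem_verts he₁ hab).1 s hs)
      · exact ⟨b, (r₂.ends_mem_verts he₂ hab).2, .refl b⟩
    · have hba : G.ReachAvoid {e | e ∈ C.edges} b a := .single heC (hab.trans Sym2.eq_swap)
      exact ⟨s, hs, hba.trans has⟩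
  intro hxy
  obtain ⟨s, hs, hys⟩ := hxy.invariant hnear ⟨c, r₂.end_mem_verts, hx⟩
  exact hsep y r₁.end_mem_verts s hs hys

lemma exists_isEdgeCut_of_mem_cycle (hG : G.IsCactus) {u c y x : V} {C : G.Walk u u}
    (hC : C.IsCycle) (hc : c ∈ C.verts) (hy : y ∈ C.verts) (hcy : c ≠ y)
    (hx : G.ReachAvoid {e | e ∈ C.edges} x c) :
    ∃ F : Finset E, F.card ≤ 2 ∧ G.IsEdgeCut x y F := by
  obtain ⟨D, hD, hDE, hDV⟩ := hC.rotate hc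
  obtain ⟨q₁, q₂, rfl⟩ := D.exists_eq_append_of_mem_verts ((hDV y).mpr hy)
  obtain ⟨a₁, f₁, h₁, r₁, rfl⟩ := q₁.exists_eq_cons_of_ne hcy
  obtain ⟨a₂, f₂, h₂, r₂, rfl⟩ := q₂.exists_eq_cons_of_ne hcy.symm
  have hDC : {e | e ∈ ((Walk.cons f₁ h₁ r₁).append (Walk.cons f₂ h₂ r₂)).edges} =
      {e | e ∈ C.edges} := Set.ext fun _ => hDE.mem_iff
  refine ⟨{f₁, f₂}, Finset.card_le_two, ?_⟩
  rw [IsEdgeCut, Finset.coe_pair]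
  exact hG.not_reachAvoid_of_isCycle_cons_append_cons hD (hDC ▸ hx)

theorem exists_isEdgeCut (hG : G.IsCactus) {x y : V} (hxy : x ≠ y) :
    ∃ F : Finset E, F.card ≤ 2 ∧ G.IsEdgeCut x y F := by
  obtain ⟨W₀, -⟩ := reachAvoid_iff_exists_walk.mp (hG.1 x y)
  have : Nonempty (G.Walk x y) := ⟨W₀⟩
  set W := Function.argmin fun p : G.Walk x y => p.edges.length
  obtain ⟨e, heW, a, hea⟩ := W.exists_last_edge (W.edges_ne_nil_of_ne hxy)
  obtain ⟨-, ⟨⟨z, C, hne, hnd, hvd, rfl⟩, heC⟩, -⟩ := hG.2 e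
  have hC : C.IsCycle := ⟨hne, hnd, hvd⟩
  have heC : e ∈ C.edges := List.mem_toFinset.mp heC
  obtain ⟨c, p, hpC, hlt, g, hgC, b, hgb⟩ :=
    W.exists_prefix_avoiding (S := {e | e ∈ C.edges}) ⟨e, heW, heC⟩
  have hcy : c ≠ y := by
    rintro rfl
    exact (Function.argmin_le (fun p : G.Walk x c => p.edges.length) p).not_gt hlt
  exact hG.exists_isEdgeCut_of_mem_cycle hC (C.ends_mem_verts hgC hgb).1
    (C.ends_mem_verts heC hea).2 hcy (reachAvoid_iff_exists_walk.mpr ⟨p, hpC⟩)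

end IsCactus

end Multigraph

theorem stmt_4_general {V E : Type} [DecidableEq E]
    (G : Multigraph V E) (v w : V) (h3 : 3 ≤ G.edgeConn v w)
    (σ : Setoid V) (hcactus : (G.quot σ).IsCactus) :
    σ.r v w := by
  by_contra hvw
  obtain ⟨F, hF, hcut⟩ :=
    hcactus.exists_isEdgeCut (x := Quotient.mk σ v) (y := Quotient.mk σ w) (hvw ∘ Quotient.exact)
  have := G.edgeConn_le_card (hcut.of_quot σ)
  omega

/-- (3-connection lemma.)  If `v ≠ w` form a 3-connection in `G`
(`λ(v, w) ≥ 3`) and `π` is a partition whose quotient `G^π` is a cactus, then `v` and `w`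
lie in the same block of `π`. -/
theorem stmt_4 {V E : Type} [Fintype V] [Fintype E] [DecidableEq E]
    (G : Multigraph V E) (v w : V) (hvw : v ≠ w) (h3 : 3 ≤ G.edgeConn v w)
    (σ : Setoid V) (hcactus : (G.quot σ).IsCactus) :
    σ.r v w :=
  stmt_4_general G v w h3 σ hcactus
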